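/- arXiv:1805.02168 — 7 statements merged into one kernel-verified Lean document; each statement's English description precedes it below -/
import Mathlib

section
/- Let G be a finite group and f : G → ℂ with ‖f‖_{A(G)} ≤ M. Then there exists a finite-dimensional Hilbert space H, a group homomorphism π : G → U(H) into the unitary group of H, and vectors v, w ∈ H with ‖v‖·‖w‖ ≤ M, such that f(x) = ⟨π(x)v, w⟩ for all x ∈ G. -/
open scoped BigOperators ComplexOrder

noncomputable def convMatrix {G : Type*} [Group G] [Fintype G] (f : G → ℂ) :
    Matrix G G ℂ := fun x y => f (x * y⁻¹) / (Fintype.card G)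

/-- The algebra norm `‖f‖_{A(G)}`: the sum of the singular values of the
convolution operator `g ↦ f ∗ g` on `L₂(G)`. -/
noncomputable def algNorm {G : Type*} [Group G] [Fintype G] [DecidableEq G]
    (f : G → ℂ) : ℝ :=
  (((Matrix.posSemidef_conjTranspose_mul_self (convMatrix f)).isHermitian.eigenvectorUnitary : Matrix G G ℂ) *
    Matrix.diagonal (((↑) : ℝ → ℂ) ∘ (Real.sqrt ·) ∘
      (Matrix.posSemidef_conjTranspose_mul_self (convMatrix f)).isHermitian.eigenvalues) *
    (star (Matrix.posSemidef_conjTranspose_mul_self (convMatrix f)).isHermitian.eigenvectorUnitary :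
      Matrix G G ℂ)).trace.re

/-! With `A` the convolution matrix of `f` and `S = AᴴA`, put `C = S^{1/4}` and `D = A S^{-1/4}`,
the inverse taken on the support of `S`. Then `A = D Cᴴ` and `CᴴC = DᴴD = S^{1/2} = |A|`, so `C` and
`D` both have squared Hilbert–Schmidt norm `tr |A| = ‖f‖_{A(G)}`. The group acts unitarily on the
Hilbert–Schmidt space by translating rows, and since `A a (x⁻¹ a) = f x / |G|` for every `a`,
`⟨x • C, D⟩ = ∑ₐ (D Cᴴ) a (x⁻¹ a) = f x`. -/

open Matrix

namespace Matrix

variable {𝕜 m n : Type*} [RCLike 𝕜] [Fintype m] [Fintype n]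

lemma norm_toLp_vec_sq (C : Matrix m n 𝕜) :
    ‖WithLp.toLp 2 C.vec‖ ^ 2 = RCLike.re (Cᴴ * C).trace := by
  rw [← inner_self_eq_norm_sq (𝕜 := 𝕜), EuclideanSpace.inner_toLp_toLp, dotProduct_comm,
    star_vec_dotProduct_vec]

variable [DecidableEq n]

lemma continuousOn_spectrum_real (B : Matrix n n 𝕜) (f : ℝ → ℝ) :
    ContinuousOn f (spectrum ℝ B) :=
  B.finite_real_spectrum.continuousOn f

lemma conjTranspose_cfc (B : Matrix n n 𝕜) (f : ℝ → ℝ) : (cfc f B)ᴴ = cfc f B :=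
  (cfc_predicate f B).star_eq

lemma cfc_mul_cfc (B : Matrix n n 𝕜) (f g : ℝ → ℝ) :
    cfc f B * cfc g B = cfc (fun t => f t * g t) B :=
  (cfc_mul f g B (continuousOn_spectrum_real B f) (continuousOn_spectrum_real B g)).symm

lemma nonneg_of_mem_spectrum_conjTranspose_mul_self (A : Matrix m n 𝕜) {t : ℝ}
    (ht : t ∈ spectrum ℝ (Aᴴ * A)) : 0 ≤ t := by
  have hA := posSemidef_conjTranspose_mul_self A
  obtain ⟨i, rfl⟩ := hA.isHermitian.spectrum_real_eq_range_eigenvalues ▸ ht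
  exact hA.eigenvalues_nonneg i

lemma mul_cfc_conjTranspose_mul_self_eq_self {A : Matrix m n 𝕜} {f : ℝ → ℝ}
    (hf : ∀ t, 0 < t → f t = 1) : A * cfc f (Aᴴ * A) = A := by
  have hS : IsSelfAdjoint (Aᴴ * A) := isHermitian_conjTranspose_mul_self A
  have hSN : Aᴴ * A * cfc (fun t => 1 - f t) (Aᴴ * A) = 0 := by
    conv_lhs => enter [1]; rw [← cfc_id' ℝ (Aᴴ * A) hS]
    rw [cfc_mul_cfc, ← cfc_zero ℝ (Aᴴ * A)]
    refine cfc_congr fun t ht => ?_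
    rcases (nonneg_of_mem_spectrum_conjTranspose_mul_self A ht).eq_or_lt with rfl | ht
    · simp
    · simp [hf t ht]
  have hAN : A * cfc (fun t => 1 - f t) (Aᴴ * A) = 0 := by
    rw [← conjTranspose_mul_self_eq_zero, conjTranspose_mul, conjTranspose_cfc, Matrix.mul_assoc,
      ← Matrix.mul_assoc Aᴴ, hSN, Matrix.mul_zero]
  rwa [cfc_sub _ _ _ (continuousOn_spectrum_real _ _) (continuousOn_spectrum_real _ _),
    cfc_const_one ℝ (Aᴴ * A) hS, Matrix.mul_sub, Matrix.mul_one, sub_eq_zero, eq_comm] at hAN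

theorem exists_eq_mul_conjTranspose_gram_eq_abs (A : Matrix m n 𝕜) :
    ∃ (C : Matrix n n 𝕜) (D : Matrix m n 𝕜), D * Cᴴ = A ∧
      Cᴴ * C = cfc Real.sqrt (Aᴴ * A) ∧ Dᴴ * D = cfc Real.sqrt (Aᴴ * A) := by
  have hS : IsSelfAdjoint (Aᴴ * A) := isHermitian_conjTranspose_mul_self A
  -- `(√√t)⁻¹` is the pseudo-inverse of `√√t` since `0⁻¹ = 0`.
  refine ⟨cfc (fun t => √√t) (Aᴴ * A), A * cfc (fun t => (√√t)⁻¹) (Aᴴ * A), ?_, ?_, ?_⟩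
  · rw [conjTranspose_cfc, Matrix.mul_assoc, cfc_mul_cfc]
    exact mul_cfc_conjTranspose_mul_self_eq_self fun t ht => inv_mul_cancel₀ (by positivity)
  · rw [conjTranspose_cfc, cfc_mul_cfc]
    exact cfc_congr fun t _ => Real.mul_self_sqrt (Real.sqrt_nonneg t)
  · rw [conjTranspose_mul, conjTranspose_cfc, Matrix.mul_assoc, ← Matrix.mul_assoc Aᴴ]
    conv_lhs => enter [2, 1]; rw [← cfc_id' ℝ (Aᴴ * A) hS]
    rw [cfc_mul_cfc, cfc_mul_cfc]
    refine cfc_congr fun t _ => ?_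
    calc (√√t)⁻¹ * (t * (√√t)⁻¹) = t / (√√t * √√t) := by ring
      _ = √t := by rw [Real.mul_self_sqrt (Real.sqrt_nonneg t), Real.div_sqrt]

end Matrix

section

variable (𝕜 : Type*) [RCLike 𝕜] (G ι : Type*) [Group G] [Fintype G] [Fintype ι]

noncomputable def leftTranslationRep :
    G →* (EuclideanSpace 𝕜 (ι × G) ≃ₗᵢ[𝕜] EuclideanSpace 𝕜 (ι × G)) where
  toFun x :=
    LinearIsometryEquiv.piLpCongrLeft 2 𝕜 𝕜 ((Equiv.refl ι).prodCongr (MulAction.toPerm x))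
  map_one' := by ext u ⟨i, a⟩; simp
  map_mul' x y := by ext u ⟨i, a⟩; simp [mul_assoc]

variable {𝕜 G ι}

@[simp]
lemma leftTranslationRep_apply (x : G) (u : EuclideanSpace 𝕜 (ι × G)) (p : ι × G) :
    leftTranslationRep 𝕜 G ι x u p = u (p.1, x⁻¹ * p.2) := by
  simp [leftTranslationRep, Prod.map]

lemma inner_leftTranslationRep_vec (C D : Matrix G ι 𝕜) (x : G) :
    inner 𝕜 (leftTranslationRep 𝕜 G ι x (WithLp.toLp 2 C.vec)) (WithLp.toLp 2 D.vec) =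
      ∑ a, (D * Cᴴ) a (x⁻¹ * a) := by
  simp only [EuclideanSpace.inner_eq_star_dotProduct, dotProduct, Fintype.sum_prod_type,
    Matrix.mul_apply]
  simp [Finset.sum_comm (γ := ι)]

end

theorem exists_unitary_rep_in_Type {G H : Type*} [Group G] [NormedAddCommGroup H]
    [InnerProductSpace ℂ H] [FiniteDimensional ℂ H] (π : G →* (H ≃ₗᵢ[ℂ] H)) (v w : H) :
    ∃ (H' : Type) (_ : NormedAddCommGroup H') (_ : InnerProductSpace ℂ H')
      (_ : FiniteDimensional ℂ H') (π' : G →* (H' ≃ₗᵢ[ℂ] H')) (v' w' : H'),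
      ‖v'‖ = ‖v‖ ∧ ‖w'‖ = ‖w‖ ∧ ∀ x, inner ℂ (π' x v') w' = inner ℂ (π x v) w := by
  let e := (stdOrthonormalBasis ℂ H).repr
  let π' : G →* _ :=
    { toFun x := e.symm.trans ((π x).trans e)
      map_one' := by ext; simp
      map_mul' x y := by ext; simp }
  refine ⟨_, inferInstance, inferInstance, inferInstance, π', e v, e w, e.norm_map v, e.norm_map w,
    fun x => ?_⟩
  simp [π']

lemma sum_convMatrix_apply_inv_mul {G : Type*} [Group G] [Fintype G] (f : G → ℂ) (x : G) :
    ∑ a, convMatrix f a (x⁻¹ * a) = f x := by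
  have hcard : (Fintype.card G : ℂ) ≠ 0 := Nat.cast_ne_zero.mpr Fintype.card_ne_zero
  calc ∑ a, convMatrix f a (x⁻¹ * a) = ∑ _a : G, f x / Fintype.card G := by
        simp only [convMatrix, _root_.mul_inv_rev, inv_inv, mul_inv_cancel_left]
    _ = f x := by
        rw [Finset.sum_const, Finset.card_univ, nsmul_eq_mul]
        field_simp

lemma algNorm_eq_re_trace_cfc {G : Type*} [Group G] [Fintype G] [DecidableEq G] (f : G → ℂ) :
    algNorm f = (cfc Real.sqrt ((convMatrix f)ᴴ * convMatrix f)).trace.re := by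
  rw [(Matrix.posSemidef_conjTranspose_mul_self _).isHermitian.cfc_eq]
  rfl

/-- If `‖f‖_{A(G)} ≤ M` then `f(x) = ⟨π(x)v, w⟩` for a finite-dimensional unitary
representation `π` and vectors `v, w` with `‖v‖·‖w‖ ≤ M`. -/
theorem exists_unitary_rep_of_algNorm_le
    {G : Type*} [Group G] [Fintype G] [DecidableEq G] (f : G → ℂ) (M : ℝ)
    (hf : algNorm f ≤ M) :
    ∃ (H : Type) (_ : NormedAddCommGroup H) (_ : InnerProductSpace ℂ H)
      (_ : FiniteDimensional ℂ H) (π : G →* (H ≃ₗᵢ[ℂ] H)) (v w : H),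
      ‖v‖ * ‖w‖ ≤ M ∧ ∀ x : G, f x = inner ℂ ((π x) v) w := by
  obtain ⟨C, D, hDC, hC, hD⟩ := (convMatrix f).exists_eq_mul_conjTranspose_gram_eq_abs
  obtain ⟨H, _, _, _, π, v, w, hv, hw, hπ⟩ :=
    exists_unitary_rep_in_Type (leftTranslationRep ℂ G G) (WithLp.toLp 2 C.vec)
      (WithLp.toLp 2 D.vec)
  have hv_sq : ‖v‖ ^ 2 = algNorm f := by
    rw [hv, norm_toLp_vec_sq, hC, algNorm_eq_re_trace_cfc]; rfl
  have hw_sq : ‖w‖ ^ 2 = algNorm f := by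
    rw [hw, norm_toLp_vec_sq, hD, algNorm_eq_re_trace_cfc]; rfl
  have hvw : ‖v‖ = ‖w‖ :=
    (pow_left_inj₀ (norm_nonneg _) (norm_nonneg _) two_ne_zero).mp (hv_sq.trans hw_sq.symm)
  refine ⟨H, inferInstance, inferInstance, inferInstance, π, v, w, ?_, fun x => ?_⟩
  · rwa [← hvw, ← sq, hv_sq]
  · rw [hπ, inner_leftTranslationRep_vec, hDC, sum_convMatrix_apply_inv_mul]
end

section
/- Let G be a finite group, Z, Z⁺, Z⁻ ⊆ G non-empty sets and X a symmetric neighbourhood of the identity such that Z⁻X ⊆ Z, ZX⁻¹ ⊆ Z⁺, and |Z⁺ \ Z⁻| ≤ η|Z|. Then for any bounded f : G → ℂ and any x ∈ X and t ∈ G, |f ∗ m_Z(tx) − f ∗ m_Z(t)| ≤ η ‖f‖_∞, where m_Z is the uniform probability measure on Z. -/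
/-!
Right translation by `x` turns `f ∗ m_Z (t x)` into the average of `f (t w⁻¹)` over the translate
`Z x⁻¹`, which has the same size as `Z`. The two averages differ only through the symmetric
difference `Z x⁻¹ ∆ Z`, and `η`-closedness puts it inside `Z⁺ \ Z⁻`: both `Z x⁻¹` and `Z` lie in
`Z X⁻¹ ⊆ Z⁺`, while `Z⁻ ⊆ Z⁻ X ⊆ Z` and `Z⁻ x ⊆ Z` keep `Z⁻` inside both.
-/

open scoped BigOperators Pointwise

/-- Convolution of `f` with the uniform probability measure on a finite set `Z`:
`f ∗ m_Z (t) = (1/|Z|) ∑_{z ∈ Z} f(t z⁻¹)`. -/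
noncomputable def convM {G : Type*} [Group G] [DecidableEq G] (f : G → ℂ)
    (Z : Finset G) : G → ℂ :=
  fun t => (∑ z ∈ Z, f (t * z⁻¹)) / (Z.card : ℂ)

open Finset
open scoped symmDiff

theorem symmDiff_le_sdiff {α : Type*} [GeneralizedCoheytingAlgebra α] {a b c d : α}
    (hc : a ⊔ b ≤ c) (hd : d ≤ a ⊓ b) : a ∆ b ≤ c \ d :=
  symmDiff_eq_sup_sdiff_inf a b ▸ sdiff_le_sdiff hc hd

theorem Finset.norm_sum_sub_sum_le_card_symmDiff_mul {ι E : Type*} [DecidableEq ι]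
    [SeminormedAddCommGroup E]
    (s t : Finset ι) {g : ι → E} {M : ℝ} (hg : ∀ i, ‖g i‖ ≤ M) :
    ‖∑ i ∈ s, g i - ∑ i ∈ t, g i‖ ≤ #(s ∆ t) * M := by
  have hsum : ∀ u : Finset ι, ‖∑ i ∈ u, g i‖ ≤ #u * M := fun u => by
    simpa using norm_sum_le_of_le u fun i _ => hg i
  have hcard : #(s ∆ t) = #(s \ t) + #(t \ s) :=
    card_union_of_disjoint disjoint_sdiff_sdiff
  rw [← sum_sdiff_sub_sum_sdiff, hcard, Nat.cast_add, add_mul]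
  exact (norm_sub_le _ _).trans (add_le_add (hsum _) (hsum _))

section Group

variable {G : Type*} [Group G] [DecidableEq G]

theorem convM_mul_right (f : G → ℂ) (Z : Finset G) (t x : G) :
    convM f Z (t * x) = convM f (Z * {x⁻¹}) t := by
  have hinj : Set.InjOn (· * x⁻¹) (Z : Set G) := (mul_left_injective x⁻¹).injOn
  rw [convM, convM, card_mul_singleton, mul_singleton, ← image_smul]
  simp only [MulOpposite.smul_eq_mul_unop, MulOpposite.unop_op, sum_image hinj, mul_inv_rev,
    inv_inv, mul_assoc]

theorem norm_convM_sub_convM_le {f : G → ℂ} {M : ℝ} (hf : ∀ y, ‖f y‖ ≤ M) {A B : Finset G}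
    (hAB : #A = #B) (t : G) :
    ‖convM f A t - convM f B t‖ ≤ #(A ∆ B) * M / #B := by
  rw [convM, convM, hAB, div_sub_div_same, norm_div, Complex.norm_natCast]
  gcongr
  exact norm_sum_sub_sum_le_card_symmDiff_mul A B fun w => hf _

theorem symmDiff_mul_singleton_inv_subset {Z Zp Zm X : Finset G} (hXone : (1 : G) ∈ X)
    (h1 : Zm * X ⊆ Z) (h2 : Z * X⁻¹ ⊆ Zp) {x : G} (hx : x ∈ X) :
    (Z * {x⁻¹}) ∆ Z ⊆ Zp \ Zm := by
  refine symmDiff_le_sdiff (union_subset ?_ ?_) (subset_inter ?_ ?_)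
  · exact (mul_subset_mul_left (singleton_subset_iff.2 (inv_mem_inv hx))).trans h2
  · exact (subset_mul_left Z (by simpa using inv_mem_inv hXone)).trans h2
  · calc Zm = Zm * {x} * {x⁻¹} := by
          rw [mul_assoc, singleton_mul_singleton, mul_inv_cancel, singleton_one, mul_one]
      _ ⊆ Z * {x⁻¹} :=
          mul_subset_mul_right ((mul_subset_mul_left (singleton_subset_iff.2 hx)).trans h1)
  · exact (subset_mul_left Zm hXone).trans h1

end Group

theorem convM_approx_invariant_general {G : Type*} [Group G] [DecidableEq G]
    (Z Zp Zm X : Finset G) (η : ℝ) (hZ : Z.Nonempty)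
    (hXone : (1 : G) ∈ X)
    (h1 : Zm * X ⊆ Z) (h2 : Z * X⁻¹ ⊆ Zp)
    (h3 : ((Zp \ Zm).card : ℝ) ≤ η * Z.card)
    (f : G → ℂ) (M : ℝ) (hM : ∀ y : G, ‖f y‖ ≤ M)
    (x : G) (hx : x ∈ X) (t : G) :
    ‖convM f Z (t * x) - convM f Z t‖ ≤ η * M := by
  have hZ0 : (0 : ℝ) < #Z := by exact_mod_cast hZ.card_pos
  have hM0 : 0 ≤ M := (norm_nonneg _).trans (hM 1)
  have hboundary : (#((Z * {x⁻¹}) ∆ Z) : ℝ) ≤ #(Zp \ Zm) := by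
    exact_mod_cast card_le_card (symmDiff_mul_singleton_inv_subset hXone h1 h2 hx)
  rw [convM_mul_right]
  calc _ ≤ #((Z * {x⁻¹}) ∆ Z) * M / #Z := norm_convM_sub_convM_le hM (card_mul_singleton Z x⁻¹) t
    _ ≤ η * #Z * M / #Z := by gcongr; exact hboundary.trans h3
    _ = η * M := by field_simp

/-- If `(Z, X; Z⁺, Z⁻)` is `η`-closed then `f ∗ m_Z` is `η‖f‖_∞`-invariant under
right translation by elements of `X`. -/
theorem convM_approx_invariant {G : Type*} [Group G] [Fintype G] [DecidableEq G]
    (Z Zp Zm X : Finset G) (η : ℝ) (hZ : Z.Nonempty)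
    (hXone : (1 : G) ∈ X) (hXsymm : X⁻¹ = X)
    (h1 : Zm * X ⊆ Z) (h2 : Z * X⁻¹ ⊆ Zp)
    (h3 : ((Zp \ Zm).card : ℝ) ≤ η * Z.card)
    (f : G → ℂ) (M : ℝ) (hM : ∀ y : G, ‖f y‖ ≤ M)
    (x : G) (hx : x ∈ X) (t : G) :
    ‖convM f Z (t * x) - convM f Z t‖ ≤ η * M :=
  convM_approx_invariant_general Z Zp Zm X η hZ hXone h1 h2 h3 f M hM x hx t
end

section
/- For natural numbers k and r, the number of trivial tuples in [k]^{2r+1} satisfies |T_{k,2r+1}| ≤ C^r · r^r · k^{r+1} for some absolute constant C > 0, where a tuple i ∈ [k]^t is called trivial if at most one value j ∈ [k] appears exactly once among the coordinates of i. -/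
open scoped BigOperators Classical

/-- A tuple `i ∈ [k]^t` is trivial if at most one value `j ∈ [k]` appears exactly
once among its coordinates. -/
def IsTrivialTuple {t k : ℕ} (i : Fin t → Fin k) : Prop :=
  (Finset.univ.filter fun j : Fin k =>
    (Finset.univ.filter fun s : Fin t => i s = j).card = 1).card ≤ 1

open Finset

private lemma min'_congr_aux {α : Type*} [LinearOrder α] {A B : Finset α} (h : A = B)
    (hA : A.Nonempty) (hB : B.Nonempty) : A.min' hA = B.min' hB := by subst h; rfl

/-- First occurrence (minimal index) of the value `i s`. -/
noncomputable def FO {n k : ℕ} (i : Fin n → Fin k) (s : Fin n) : Fin n :=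
  (univ.filter fun t => i t = i s).min' ⟨s, by simp⟩

lemma FO_apply {n k : ℕ} (i : Fin n → Fin k) (s : Fin n) : i (FO i s) = i s := by
  have h := Finset.min'_mem (univ.filter fun t => i t = i s) ⟨s, by simp⟩
  simpa [FO] using (Finset.mem_filter.1 h).2

lemma FO_congr {n k : ℕ} (i : Fin n → Fin k) {s s' : Fin n} (h : i s = i s') :
    FO i s = FO i s' := by
  have hset : (univ.filter fun t => i t = i s) = (univ.filter fun t => i t = i s') := by
    simp only [h]
  exact min'_congr_aux hset _ _

lemma FO_idem {n k : ℕ} (i : Fin n → Fin k) (s : Fin n) : FO i (FO i s) = FO i s :=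
  FO_congr i (FO_apply i s)

/-- The set of first-occurrence indices. -/
noncomputable def Sset {n k : ℕ} (i : Fin n → Fin k) : Finset (Fin n) :=
  univ.filter fun s => FO i s = s

lemma FO_mem_Sset {n k : ℕ} (i : Fin n → Fin k) (s : Fin n) : FO i s ∈ Sset i := by
  simp [Sset, FO_idem]

lemma Sset_card_le {k r : ℕ} (i : Fin (2 * r + 1) → Fin k) (h : IsTrivialTuple i) :
    (Sset i).card ≤ r + 1 := by
  classical
  set I : Finset (Fin k) := univ.image i with hI
  have hinj : Set.InjOn i (Sset i) := by
    intro s hs s' hs' hss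
    simp only [Sset, coe_filter, Set.mem_setOf_eq] at hs hs'
    rw [← hs.2, ← hs'.2]
    exact FO_congr i hss
  have himg : (Sset i).image i = I := by
    apply Finset.Subset.antisymm
    · intro j hj
      simp only [mem_image] at hj
      obtain ⟨s, _, rfl⟩ := hj
      exact mem_image_of_mem i (mem_univ s)
    · intro j hj
      simp only [hI, mem_image] at hj
      obtain ⟨s, _, rfl⟩ := hj
      refine mem_image.2 ⟨FO i s, FO_mem_Sset i s, FO_apply i s⟩
  have hcard : (Sset i).card = I.card := by
    rw [← himg]; exact (Finset.card_image_of_injOn hinj).symm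
  have hsum : (univ : Finset (Fin (2 * r + 1))).card
      = ∑ j ∈ I, (univ.filter fun s => i s = j).card :=
    Finset.card_eq_sum_card_fiberwise (fun s _ => mem_image_of_mem i (mem_univ s))
  have huniv : (univ : Finset (Fin (2 * r + 1))).card = 2 * r + 1 := by simp
  set U := I.filter (fun j => (univ.filter fun s => i s = j).card = 1) with hU
  have hUcard : U.card ≤ 1 := by
    refine le_trans (Finset.card_le_card ?_) h
    intro j hj
    simp only [hU, mem_filter] at hj ⊢
    exact ⟨mem_univ _, hj.2⟩
  have hge : ∀ j ∈ I \ U, 2 ≤ (univ.filter fun s => i s = j).card := by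
    intro j hj
    rw [mem_sdiff] at hj
    obtain ⟨hjI, hjU⟩ := hj
    have h1 : 0 < (univ.filter fun s => i s = j).card := by
      rw [card_pos]
      obtain ⟨s, _, rfl⟩ := mem_image.1 hjI
      exact ⟨s, by simp⟩
    have h2 : (univ.filter fun s => i s = j).card ≠ 1 := by
      intro hc
      exact hjU (mem_filter.2 ⟨hjI, hc⟩)
    omega
  have h2m : 2 * (I \ U).card ≤ 2 * r + 1 := by
    have hb : (I \ U).card • 2 ≤ ∑ j ∈ I \ U, (univ.filter fun s => i s = j).card :=
      Finset.card_nsmul_le_sum _ _ _ hge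
    have hsub : ∑ j ∈ I \ U, (univ.filter fun s => i s = j).card
        ≤ ∑ j ∈ I, (univ.filter fun s => i s = j).card :=
      Finset.sum_le_sum_of_subset (sdiff_subset)
    have := hb.trans hsub
    rw [← hsum, huniv] at this
    simpa [smul_eq_mul, mul_comm] using this
  have hsd : I.card - U.card ≤ (I \ U).card := Finset.le_card_sdiff U I
  omega

/-- The number of trivial tuples in `[k]^{2r+1}` is at most `C^r r^r k^{r+1}`. -/
theorem card_trivial_tuples_le :
    ∃ C : ℝ, 0 < C ∧ ∀ k r : ℕ,
      ((Finset.univ.filter fun i : Fin (2 * r + 1) → Fin k =>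
          IsTrivialTuple i).card : ℝ) ≤ C ^ r * r ^ r * k ^ (r + 1) := by
  classical
  refine ⟨16, by norm_num, ?_⟩
  intro k r
  set T := (Finset.univ.filter fun i : Fin (2 * r + 1) → Fin k => IsTrivialTuple i) with hT
  rcases Nat.eq_zero_or_pos r with hr | hr
  · subst hr
    have h1 : T.card ≤ k ^ 1 := by
      refine le_trans (card_filter_le _ _) ?_
      simp [Fintype.card_fun]
    simpa using (Nat.cast_le.2 h1 : (T.card : ℝ) ≤ ((k ^ 1 : ℕ) : ℝ))
  by_cases hk : k ≤ r
  · -- small k : all tuples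
    have h1 : T.card ≤ k ^ (2 * r + 1) := by
      refine le_trans (card_filter_le _ _) ?_
      simp [Fintype.card_fun]
    have h2 : k ^ (2 * r + 1) ≤ r ^ r * k ^ (r + 1) := by
      have he : k ^ (2 * r + 1) = k ^ r * k ^ (r + 1) := by
        rw [← pow_add]; ring_nf
      rw [he]
      exact Nat.mul_le_mul_right _ (Nat.pow_le_pow_left hk r)
    have h3 : (T.card : ℝ) ≤ ((r ^ r * k ^ (r + 1) : ℕ) : ℝ) :=
      Nat.cast_le.2 (h1.trans h2)
    push_cast at h3
    have h16 : (1 : ℝ) ≤ 16 ^ r := one_le_pow₀ (by norm_num)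
    nlinarith [pow_nonneg (by positivity : (0:ℝ) ≤ (r:ℝ)) r,
      pow_nonneg (by positivity : (0:ℝ) ≤ (k:ℝ)) (r+1),
      mul_nonneg (pow_nonneg (by positivity : (0:ℝ) ≤ (r:ℝ)) r)
        (pow_nonneg (by positivity : (0:ℝ) ≤ (k:ℝ)) (r+1))]
  · push_neg at hk   -- r < k
    have hk0 : 0 < k := by omega
    set F := ((univ : Finset (Fin (2 * r + 1))).powerset.filter
      fun S : Finset (Fin (2 * r + 1)) => S.card ≤ r + 1) with hF
    have hmemF : ∀ i ∈ T, Sset i ∈ F := by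
      intro i hi
      simp only [hF, mem_filter, mem_powerset]
      exact ⟨subset_univ _, Sset_card_le i (mem_filter.1 hi).2⟩
    have hsum : T.card = ∑ S ∈ F, (T.filter fun i => Sset i = S).card :=
      Finset.card_eq_sum_card_fiberwise hmemF
    -- per-fiber bound
    have hfiber : ∀ S : Finset (Fin (2 * r + 1)),
        (T.filter fun i => Sset i = S).card ≤ S.card ^ (2 * r + 1 - S.card) * k ^ S.card := by
      intro S
      set v0 : Fin k := ⟨0, hk0⟩
      set tG : Finset (Fin (2 * r + 1) → Fin (2 * r + 1)) :=
        Fintype.piFinset (fun s => if s ∈ S then {s} else S) with htG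
      set tV : Finset (Fin (2 * r + 1) → Fin k) :=
        Fintype.piFinset (fun s => if s ∈ S then univ else {v0}) with htV
      have hmap : ∀ i ∈ T.filter (fun i => Sset i = S),
          ((fun s => if s ∈ S then s else FO i s, fun s => if s ∈ S then i s else v0) :
            (Fin (2 * r + 1) → Fin (2 * r + 1)) × (Fin (2 * r + 1) → Fin k)) ∈ tG ×ˢ tV := by
        intro i hi
        have hSi : Sset i = S := (mem_filter.1 hi).2
        rw [Finset.mem_product]
        constructor
        · rw [htG, Fintype.mem_piFinset]
          intro s
          by_cases hs : s ∈ S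
          · simp [hs]
          · simpa [hs] using hSi ▸ FO_mem_Sset i s
        · rw [htV, Fintype.mem_piFinset]
          intro s
          by_cases hs : s ∈ S <;> simp [hs]
      have hinj : Set.InjOn
          (fun i : Fin (2 * r + 1) → Fin k =>
            ((fun s => if s ∈ S then s else FO i s, fun s => if s ∈ S then i s else v0) :
              (Fin (2 * r + 1) → Fin (2 * r + 1)) × (Fin (2 * r + 1) → Fin k)))
          (T.filter fun i => Sset i = S) := by
        intro i hi i' hi' heq
        simp only [Finset.coe_filter, Set.mem_setOf_eq] at hi hi'
        have h1 := congrArg Prod.fst heq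
        have h2 := congrArg Prod.snd heq
        simp only at h1 h2
        funext s
        by_cases hs : s ∈ S
        · have := congrFun h2 s
          simpa [hs] using this
        · have hFO : FO i s = FO i' s := by
            have := congrFun h1 s
            simpa [hs] using this
          have hu : FO i s ∈ S := by
            rw [← hi.2]; exact FO_mem_Sset i s
          have hval : i (FO i s) = i' (FO i s) := by
            have := congrFun h2 (FO i s)
            simpa [hu] using this
          calc i s = i (FO i s) := (FO_apply i s).symm
            _ = i' (FO i s) := hval
            _ = i' (FO i' s) := by rw [hFO]
            _ = i' s := FO_apply i' s
      have hle : (T.filter fun i => Sset i = S).card ≤ (tG ×ˢ tV).card :=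
        Finset.card_le_card_of_injOn _ hmap hinj
      have hGcard : tG.card = S.card ^ (2 * r + 1 - S.card) := by
        rw [htG, Fintype.card_piFinset]
        rw [← Finset.prod_mul_prod_compl S]
        have e1 : ∏ s ∈ S, ((if s ∈ S then ({s} : Finset (Fin (2*r+1))) else S)).card = 1 := by
          refine Finset.prod_eq_one ?_
          intro s hs; simp [hs]
        have e2 : ∏ s ∈ Sᶜ, ((if s ∈ S then ({s} : Finset (Fin (2*r+1))) else S)).card
            = S.card ^ (2 * r + 1 - S.card) := by
          have : ∀ s ∈ Sᶜ, ((if s ∈ S then ({s} : Finset (Fin (2*r+1))) else S)).card = S.card := by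
            intro s hs
            simp [Finset.mem_compl.1 hs]
          rw [Finset.prod_congr rfl this, Finset.prod_const, Finset.card_compl,
            Fintype.card_fin]
        rw [e1, e2, one_mul]
      have hVcard : tV.card = k ^ S.card := by
        rw [htV, Fintype.card_piFinset]
        rw [← Finset.prod_mul_prod_compl S]
        have e1 : ∏ s ∈ S, ((if s ∈ S then (univ : Finset (Fin k)) else {v0})).card
            = k ^ S.card := by
          have : ∀ s ∈ S, ((if s ∈ S then (univ : Finset (Fin k)) else {v0})).card = k := by
            intro s hs; simp [hs]
          rw [Finset.prod_congr rfl this, Finset.prod_const]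
        have e2 : ∏ s ∈ Sᶜ, ((if s ∈ S then (univ : Finset (Fin k)) else {v0})).card = 1 := by
          refine Finset.prod_eq_one ?_
          intro s hs; simp [Finset.mem_compl.1 hs]
        rw [e1, e2, mul_one]
      calc (T.filter fun i => Sset i = S).card ≤ (tG ×ˢ tV).card := hle
        _ = tG.card * tV.card := Finset.card_product _ _
        _ = S.card ^ (2 * r + 1 - S.card) * k ^ S.card := by rw [hGcard, hVcard]
    -- per-term numeric bound
    have hterm : ∀ S ∈ F, S.card ^ (2 * r + 1 - S.card) * k ^ S.card
        ≤ (r + 1) ^ r * k ^ (r + 1) := by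
      intro S hS
      have hm : S.card ≤ r + 1 := (mem_filter.1 hS).2
      calc S.card ^ (2 * r + 1 - S.card) * k ^ S.card
          ≤ (r + 1) ^ (2 * r + 1 - S.card) * k ^ S.card :=
            Nat.mul_le_mul_right _ (Nat.pow_le_pow_left hm _)
        _ = (r + 1) ^ r * (r + 1) ^ (r + 1 - S.card) * k ^ S.card := by
            rw [← pow_add]; congr 2; omega
        _ ≤ (r + 1) ^ r * k ^ (r + 1 - S.card) * k ^ S.card := by
            refine Nat.mul_le_mul_right _ (Nat.mul_le_mul_left _ ?_)
            exact Nat.pow_le_pow_left hk _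
        _ = (r + 1) ^ r * k ^ (r + 1) := by
            rw [mul_assoc, ← pow_add]; congr 2; omega
    have hFcard : F.card ≤ 2 ^ (2 * r + 1) := by
      refine le_trans (Finset.card_le_card (filter_subset _ _)) ?_
      simp [Finset.card_powerset]
    have total : T.card ≤ 2 ^ (2 * r + 1) * ((r + 1) ^ r * k ^ (r + 1)) := by
      rw [hsum]
      calc ∑ S ∈ F, (T.filter fun i => Sset i = S).card
          ≤ ∑ S ∈ F, (r + 1) ^ r * k ^ (r + 1) :=
            Finset.sum_le_sum (fun S hS => (hfiber S).trans (hterm S hS))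
        _ = F.card * ((r + 1) ^ r * k ^ (r + 1)) := by rw [Finset.sum_const, smul_eq_mul]
        _ ≤ 2 ^ (2 * r + 1) * ((r + 1) ^ r * k ^ (r + 1)) :=
            Nat.mul_le_mul_right _ hFcard
    have hnum : 2 ^ (2 * r + 1) * ((r + 1) ^ r * k ^ (r + 1))
        ≤ 16 ^ r * (r ^ r * k ^ (r + 1)) := by
      have h1 : (r + 1) ^ r ≤ 2 ^ r * r ^ r := by
        calc (r + 1) ^ r ≤ (2 * r) ^ r := Nat.pow_le_pow_left (by omega) r
          _ = 2 ^ r * r ^ r := mul_pow 2 r r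
      have h2 : 2 ^ (2 * r + 1) * (2 ^ r * r ^ r) ≤ 16 ^ r * r ^ r := by
        rw [← mul_assoc, ← pow_add]
        refine Nat.mul_le_mul_right _ ?_
        calc 2 ^ (2 * r + 1 + r) ≤ 2 ^ (4 * r) := Nat.pow_le_pow_right (by norm_num) (by omega)
          _ = 16 ^ r := by rw [pow_mul]; norm_num
      calc 2 ^ (2 * r + 1) * ((r + 1) ^ r * k ^ (r + 1))
          ≤ 2 ^ (2 * r + 1) * ((2 ^ r * r ^ r) * k ^ (r + 1)) :=
            Nat.mul_le_mul_left _ (Nat.mul_le_mul_right _ h1)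
        _ = (2 ^ (2 * r + 1) * (2 ^ r * r ^ r)) * k ^ (r + 1) := by ring
        _ ≤ (16 ^ r * r ^ r) * k ^ (r + 1) := Nat.mul_le_mul_right _ h2
        _ = 16 ^ r * (r ^ r * k ^ (r + 1)) := by ring
    have hfinal : (T.card : ℝ) ≤ ((16 ^ r * (r ^ r * k ^ (r + 1)) : ℕ) : ℝ) :=
      Nat.cast_le.2 (total.trans hnum)
    push_cast at hfinal
    calc (T.card : ℝ) ≤ 16 ^ r * ((r:ℝ) ^ r * (k:ℝ) ^ (r + 1)) := hfinal
      _ = 16 ^ r * (r:ℝ) ^ r * (k:ℝ) ^ (r + 1) := by ring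
end

section
/- For natural numbers k and r, the number of functions i : [2r] → [k] such that every value in the image of i is attained at least twice is at most (2r)! · η^{−2r} · exp(C η² k) for every η ∈ (0,1], for some absolute constant C; in particular, taking η² k = r (when r ≤ k), this count is at most exp(C' r) · r^r · k^r. -/
open scoped BigOperators Classical

/-- `R_{k,r}`: functions `i : [2r] → [k]` such that every value in the image is
attained at least twice. -/
def IsRepeating {r k : ℕ} (i : Fin (2 * r) → Fin k) : Prop :=
  ∀ j ∈ Set.range i, 2 ≤ (Finset.univ.filter fun s : Fin (2 * r) => i s = j).card

/-! A repeating map `[2r] → [k]` takes at most `r` values, so for `r ≤ k` it lands in one of the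
`k.choose r` sets of `r` colours; hence `|R_{k,r}| ≤ k.choose r * r ^ (2r) ≤ e ^ r r ^ r k ^ r`
(for `k < r` the trivial bound `k ^ (2r)` is even smaller). The first bound follows from this one, with `C = e³ / 4`, by
`(C η² k) ^ r ≤ r! exp (C η² k)`, `r! ≤ r ^ r` and `(2r)! ≥ (2r / e) ^ (2r)`. -/

open Finset Real

open scoped Nat

lemma two_mul_card_image_le {α β : Type*} [Fintype α] [DecidableEq β] (f : α → β)
    (hf : ∀ b ∈ Set.range f, 2 ≤ #{a | f a = b}) :
    2 * #(univ.image f) ≤ Fintype.card α := by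
  calc 2 * #(univ.image f) = ∑ _b ∈ univ.image f, 2 := by rw [sum_const, smul_eq_mul, mul_comm]
    _ ≤ ∑ b ∈ univ.image f, #{a | f a = b} :=
        sum_le_sum fun b hb => hf b (by simpa using hb)
    _ = Fintype.card α := (card_eq_sum_card_image f univ).symm

lemma Real.pow_le_exp_mul_factorial {x : ℝ} (hx : 0 ≤ x) (n : ℕ) : x ^ n ≤ exp x * n ! :=
  (div_le_iff₀ (by positivity)).1 (pow_div_factorial_le_exp x hx n)

lemma four_pow_mul_pow_le_exp_mul_factorial (r : ℕ) :
    (4 : ℝ) ^ r * (r : ℝ) ^ (2 * r) ≤ exp (2 * r) * (2 * r)! := by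
  calc (4 : ℝ) ^ r * (r : ℝ) ^ (2 * r) = ((2 * r : ℕ) : ℝ) ^ (2 * r) := by
        rw [Nat.cast_mul, mul_pow, pow_mul]; norm_num [pow_mul]
    _ ≤ exp (2 * r) * (2 * r)! := by
        simpa using pow_le_exp_mul_factorial (Nat.cast_nonneg (2 * r : ℕ)) (2 * r)

lemma IsRepeating.card_image_le {k r : ℕ} {i : Fin (2 * r) → Fin k} (hi : IsRepeating i) :
    #(univ.image i) ≤ r := by
  have := two_mul_card_image_le i hi
  simp only [Fintype.card_fin] at this
  omega

lemma card_repeating_le_choose_mul_pow {k r : ℕ} (hrk : r ≤ k) :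
    #{i : Fin (2 * r) → Fin k | IsRepeating i} ≤ k.choose r * r ^ (2 * r) := by
  have hsub : ({i : Fin (2 * r) → Fin k | IsRepeating i} : Finset _) ⊆
      (powersetCard r univ).biUnion fun T => Fintype.piFinset fun _ => T := by
    intro i hi
    obtain ⟨T, hiT, hT⟩ := exists_superset_card_eq (mem_filter.1 hi).2.card_image_le
      (by simpa using hrk)
    refine mem_biUnion.2 ⟨T, mem_powersetCard.2 ⟨subset_univ T, hT⟩, ?_⟩
    exact Fintype.mem_piFinset.2 fun s => hiT (mem_image_of_mem i (mem_univ s))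
  calc _ ≤ _ := card_le_card hsub
    _ ≤ ∑ T ∈ powersetCard r (univ : Finset (Fin k)), #(Fintype.piFinset fun _ => T) :=
        card_biUnion_le
    _ = k.choose r * r ^ (2 * r) := by
        rw [sum_congr rfl fun T hT => by rw [Fintype.card_piFinset_const, (mem_powersetCard.1 hT).2],
          sum_const, card_powersetCard, card_univ, Fintype.card_fin, smul_eq_mul]

lemma card_repeating_le_exp_mul_pow_mul_pow (k r : ℕ) :
    (#{i : Fin (2 * r) → Fin k | IsRepeating i} : ℝ) ≤ exp r * r ^ r * k ^ r := by
  rcases le_or_gt r k with hrk | hkr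
  · calc (#{i : Fin (2 * r) → Fin k | IsRepeating i} : ℝ) ≤ k.choose r * (r : ℝ) ^ (2 * r) := by
          exact_mod_cast card_repeating_le_choose_mul_pow hrk
      _ ≤ (k : ℝ) ^ r / r ! * (r : ℝ) ^ (2 * r) := by gcongr; exact Nat.choose_le_pow_div r k
      _ = (r : ℝ) ^ r / r ! * r ^ r * k ^ r := by rw [two_mul, pow_add]; ring
      _ ≤ exp r * r ^ r * k ^ r := by gcongr; exact pow_div_factorial_le_exp _ r.cast_nonneg r
  · calc (#{i : Fin (2 * r) → Fin k | IsRepeating i} : ℝ)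
        ≤ #(univ : Finset (Fin (2 * r) → Fin k)) := by exact_mod_cast card_filter_le _ _
      _ = (k : ℝ) ^ r * k ^ r := by simp [two_mul, pow_add]
      _ ≤ 1 * r ^ r * k ^ r := by rw [one_mul]; gcongr
      _ ≤ exp r * r ^ r * k ^ r := by gcongr; exact one_le_exp r.cast_nonneg

lemma card_repeating_mul_pow_le (k r : ℕ) (η : ℝ) :
    (#{i : Fin (2 * r) → Fin k | IsRepeating i} : ℝ) * η ^ (2 * r) ≤
      (2 * r)! * exp (exp 3 / 4 * η ^ 2 * k) := by
  set y := exp 3 / 4 * η ^ 2 * k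
  have hy : exp 1 * (k * η ^ 2) = 4 / exp 2 * y := by
    simp only [y]; rw [show (3 : ℝ) = 1 + 2 by norm_num, exp_add]; field_simp
  calc (#{i : Fin (2 * r) → Fin k | IsRepeating i} : ℝ) * η ^ (2 * r)
      ≤ exp r * r ^ r * k ^ r * η ^ (2 * r) :=
        mul_le_mul_of_nonneg_right (card_repeating_le_exp_mul_pow_mul_pow k r)
          ((even_two_mul r).pow_nonneg η)
    _ = r ^ r * (exp 1 * (k * η ^ 2)) ^ r := by rw [← exp_one_pow, pow_mul]; ring
    _ = (4 / exp 2) ^ r * r ^ r * y ^ r := by rw [hy, mul_pow, mul_left_comm, mul_assoc]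
    _ ≤ (4 / exp 2) ^ r * r ^ r * (exp y * r !) := by
        gcongr; exact pow_le_exp_mul_factorial (by positivity) r
    _ ≤ (4 / exp 2) ^ r * r ^ r * (exp y * r ^ r) := by
        gcongr; exact_mod_cast r.factorial_le_pow
    _ = (4 : ℝ) ^ r * r ^ (2 * r) / exp (2 * r) * exp y := by
        rw [mul_comm (2 : ℝ), exp_nat_mul, div_pow, two_mul r, pow_add]; ring
    _ ≤ (2 * r)! * exp y := by
        gcongr
        exact (div_le_iff₀ (exp_pos _)).2
          ((four_pow_mul_pow_le_exp_mul_factorial r).trans_eq (mul_comm _ _))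

theorem card_repeating_le :
    ∃ C : ℝ, 0 < C ∧ ∃ C' : ℝ, 0 < C' ∧ ∀ k r : ℕ,
      (∀ η : ℝ, 0 < η → η ≤ 1 →
        ((Finset.univ.filter fun i : Fin (2 * r) → Fin k =>
            IsRepeating i).card : ℝ) ≤
          ((2 * r).factorial : ℝ) * η ^ (-(2 * r : ℤ)) * Real.exp (C * η ^ 2 * k)) ∧
      (r ≤ k →
        ((Finset.univ.filter fun i : Fin (2 * r) → Fin k =>
            IsRepeating i).card : ℝ) ≤ Real.exp (C' * r) * r ^ r * k ^ r) := by
  refine ⟨exp 3 / 4, by positivity, 1, one_pos, fun k r => ⟨fun η hη _ => ?_, fun _ => ?_⟩⟩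
  · have hη' : η ^ (-(2 * r : ℤ)) = (η ^ (2 * r))⁻¹ := by rw [zpow_neg]; norm_cast
    rw [hη', mul_right_comm, ← div_eq_mul_inv, le_div_iff₀ (by positivity)]
    exact card_repeating_mul_pow_le k r η
  · simpa using card_repeating_le_exp_mul_pow_mul_pow k r
end

section
/- Let G be a finite group and S ⊆ G non-empty with |SS⁻¹| ≤ K|S|. Suppose A ⊆ G is non-empty and m_{S⁻¹} ∗ 1_{SS⁻¹} ∗ m_S(x) > 1/2 for all x ∈ A². Then |A²| ≤ 2K|S| and, for every non-empty Z ⊆ A⁴ with m_{S⁻¹} ∗ 1_{SS⁻¹} ∗ m_S > 1/2 on Z, we have sup_{t∈G} m_{tZ}(S) ≥ |S|/(2|SS⁻¹|) ≥ 1/(2K). -/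
open scoped BigOperators Pointwise

/-- `m_{S⁻¹} ∗ 1_{SS⁻¹} ∗ m_S (x) = (1/|S|²) ∑_{s,s' ∈ S} 1_{SS⁻¹}(s x s'⁻¹)`. -/
noncomputable def tripleConv {G : Type*} [Group G] [DecidableEq G]
    (S : Finset G) (x : G) : ℝ :=
  (∑ s ∈ S, ∑ s' ∈ S, if s * x * s'⁻¹ ∈ S * S⁻¹ then (1 : ℝ) else 0) /
    ((S.card : ℝ) ^ 2)

theorem doubling_and_translate_density
    {G : Type*} [Group G] [Fintype G] [DecidableEq G]
    (S A : Finset G) (K : ℝ) (hS : S.Nonempty) (hA : A.Nonempty)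
    (hK : ((S * S⁻¹).card : ℝ) ≤ K * S.card)
    (hA2 : ∀ x ∈ A * A, 1 / 2 < tripleConv S x) :
    ((A * A).card : ℝ) ≤ 2 * K * S.card ∧
    ∀ Z : Finset G, Z.Nonempty → Z ⊆ A * A * A * A →
      (∀ x ∈ Z, 1 / 2 < tripleConv S x) →
      (1 : ℝ) / (2 * K) ≤ (S.card : ℝ) / (2 * (S * S⁻¹).card) ∧
      ∃ t : G, (S.card : ℝ) / (2 * ((S * S⁻¹).card : ℝ)) ≤
        ((S ∩ Z.image (fun z => t * z)).card : ℝ) / (Z.card : ℝ) := by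
  classical
  have hn : (0:ℝ) < S.card := by exact_mod_cast hS.card_pos
  have hWne : (S * S⁻¹).Nonempty := hS.mul hS.inv
  have hw : (0:ℝ) < ((S * S⁻¹).card : ℝ) := by exact_mod_cast hWne.card_pos
  have hK0 : 0 < K := by nlinarith
  have hWsym : ∀ w : G, w ∈ S * S⁻¹ → w⁻¹ ∈ S * S⁻¹ := by
    intro w hwmem
    rcases Finset.mem_mul.1 hwmem with ⟨a, ha, b, hb, rfl⟩
    rw [Finset.mem_inv] at hb
    rcases hb with ⟨c, hc, rfl⟩
    exact Finset.mem_mul.2 ⟨c, hc, a⁻¹, Finset.mem_inv.2 ⟨a, ha, rfl⟩, by group⟩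
  have key : ∀ T : Finset G, T.Nonempty → (∀ x ∈ T, 1 / 2 < tripleConv S x) →
      (T.card : ℝ) * (S.card : ℝ) ^ 2 / 2 <
      ∑ x ∈ T, ∑ s ∈ S, ∑ s' ∈ S, (if s * x * s'⁻¹ ∈ S * S⁻¹ then (1:ℝ) else 0) := by
    intro T hT hT2
    have : ∑ x ∈ T, ((S.card : ℝ) ^ 2 / 2) <
        ∑ x ∈ T, ∑ s ∈ S, ∑ s' ∈ S, (if s * x * s'⁻¹ ∈ S * S⁻¹ then (1:ℝ) else 0) := by
      refine Finset.sum_lt_sum_of_nonempty hT ?_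
      intro x hx
      have h := hT2 x hx
      rw [tripleConv, lt_div_iff₀ (by positivity)] at h
      linarith
    simpa [Finset.sum_const, mul_comm, mul_div_assoc] using this
  have part1 : ((A * A).card : ℝ) ≤ 2 * K * S.card := by
    have hin : ∀ s s' : G, ∑ x ∈ A * A, (if s * x * s'⁻¹ ∈ S * S⁻¹ then (1:ℝ) else 0)
        ≤ ((S * S⁻¹).card : ℝ) := by
      intro s s'
      rw [Finset.sum_boole]
      have : ((A * A).filter (fun x => s * x * s'⁻¹ ∈ S * S⁻¹)).card ≤ (S * S⁻¹).card := by
        refine Finset.card_le_card_of_injOn (fun x => s * x * s'⁻¹) ?_ ?_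
        · intro x hx; exact (Finset.mem_filter.1 hx).2
        · intro a _ b _ h
          exact mul_left_cancel (mul_right_cancel h)
      exact_mod_cast this
    have hswap : (∑ x ∈ A * A, ∑ s ∈ S, ∑ s' ∈ S, (if s * x * s'⁻¹ ∈ S * S⁻¹ then (1:ℝ) else 0))
        = ∑ s ∈ S, ∑ s' ∈ S, ∑ x ∈ A * A, (if s * x * s'⁻¹ ∈ S * S⁻¹ then (1:ℝ) else 0) := by
      rw [Finset.sum_comm]
      exact Finset.sum_congr rfl fun s _ => Finset.sum_comm
    have hup : ∑ x ∈ A * A, ∑ s ∈ S, ∑ s' ∈ S,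
        (if s * x * s'⁻¹ ∈ S * S⁻¹ then (1:ℝ) else 0) ≤
        (S.card : ℝ) * ((S.card : ℝ) * ((S * S⁻¹).card : ℝ)) := by
      rw [hswap]
      calc ∑ s ∈ S, ∑ s' ∈ S, ∑ x ∈ A * A, (if s * x * s'⁻¹ ∈ S * S⁻¹ then (1:ℝ) else 0)
          ≤ ∑ _s ∈ S, ∑ _s' ∈ S, ((S * S⁻¹).card : ℝ) :=
            Finset.sum_le_sum fun s _ => Finset.sum_le_sum fun s' _ => hin s s'
        _ = (S.card : ℝ) * ((S.card : ℝ) * ((S * S⁻¹).card : ℝ)) := by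
            simp [Finset.sum_const]
    have hlo := key (A * A) (hA.mul hA) hA2
    nlinarith
  refine ⟨part1, ?_⟩
  intro Z hZne _hZsub hZ2
  have hzc : (0:ℝ) < Z.card := by exact_mod_cast hZne.card_pos
  refine ⟨?_, ?_⟩
  · rw [div_le_div_iff₀ (by positivity) (by positivity)]
    nlinarith
  · -- reindexing lemma
    have hre : ∀ g : G, (∑ s' ∈ S, (if s' * g⁻¹ ∈ S * S⁻¹ then (1:ℝ) else 0)) =
        ∑ w ∈ S * S⁻¹, (if w * g ∈ S then (1:ℝ) else 0) := by
      intro g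
      rw [Finset.sum_boole, Finset.sum_boole]
      congr 1
      refine Finset.card_bij (fun s' _ => s' * g⁻¹) ?_ ?_ ?_
      · intro a ha
        rw [Finset.mem_filter] at ha ⊢
        exact ⟨ha.2, by simpa using ha.1⟩
      · intro a _ b _ h; exact mul_right_cancel h
      · intro w hw'
        rw [Finset.mem_filter] at hw'
        exact ⟨w * g, Finset.mem_filter.2 ⟨hw'.2, by simpa using hw'.1⟩, by simp⟩
    have hcond : ∀ (z s s' : G), (s * z * s'⁻¹ ∈ S * S⁻¹) ↔ (s' * (s * z)⁻¹ ∈ S * S⁻¹) := by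
      intro z s s'
      constructor <;> intro h
      · have := hWsym _ h; simpa [mul_inv_rev, mul_assoc] using this
      · have := hWsym _ h; simpa [mul_inv_rev, mul_assoc] using this
    have hmain : (∑ z ∈ Z, ∑ s ∈ S, ∑ s' ∈ S, (if s * z * s'⁻¹ ∈ S * S⁻¹ then (1:ℝ) else 0))
        = ∑ s ∈ S, ∑ w ∈ S * S⁻¹, ∑ z ∈ Z, (if w * (s * z) ∈ S then (1:ℝ) else 0) := by
      calc (∑ z ∈ Z, ∑ s ∈ S, ∑ s' ∈ S, (if s * z * s'⁻¹ ∈ S * S⁻¹ then (1:ℝ) else 0))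
          = ∑ z ∈ Z, ∑ s ∈ S, ∑ w ∈ S * S⁻¹, (if w * (s * z) ∈ S then (1:ℝ) else 0) := by
            refine Finset.sum_congr rfl fun z _ => Finset.sum_congr rfl fun s _ => ?_
            rw [show (∑ s' ∈ S, (if s * z * s'⁻¹ ∈ S * S⁻¹ then (1:ℝ) else 0))
                = ∑ s' ∈ S, (if s' * (s * z)⁻¹ ∈ S * S⁻¹ then (1:ℝ) else 0) from
                Finset.sum_congr rfl fun s' _ => if_congr (hcond z s s') rfl rfl]
            exact hre (s * z)
        _ = ∑ s ∈ S, ∑ w ∈ S * S⁻¹, ∑ z ∈ Z, (if w * (s * z) ∈ S then (1:ℝ) else 0) := by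
            rw [Finset.sum_comm]
            exact Finset.sum_congr rfl fun s _ => Finset.sum_comm
    have hlo := key Z hZne hZ2
    rw [hmain] at hlo
    have hex : ∃ s ∈ S, ∃ w ∈ S * S⁻¹,
        (S.card : ℝ) * Z.card / (2 * (S * S⁻¹).card) ≤
        ∑ z ∈ Z, (if w * (s * z) ∈ S then (1:ℝ) else 0) := by
      by_contra hcon
      push_neg at hcon
      have hb : (∑ s ∈ S, ∑ w ∈ S * S⁻¹, ∑ z ∈ Z, (if w * (s * z) ∈ S then (1:ℝ) else 0))
          ≤ (S.card : ℝ) * (((S * S⁻¹).card : ℝ) *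
            ((S.card : ℝ) * Z.card / (2 * (S * S⁻¹).card))) := by
        calc (∑ s ∈ S, ∑ w ∈ S * S⁻¹, ∑ z ∈ Z, (if w * (s * z) ∈ S then (1:ℝ) else 0))
            ≤ ∑ _s ∈ S, ∑ _w ∈ S * S⁻¹, ((S.card : ℝ) * Z.card / (2 * (S * S⁻¹).card)) :=
              Finset.sum_le_sum fun s hs => Finset.sum_le_sum fun w hw' => (hcon s hs w hw').le
          _ = _ := by simp [Finset.sum_const]
      have heq : (S.card : ℝ) * (((S * S⁻¹).card : ℝ) *
          ((S.card : ℝ) * Z.card / (2 * (S * S⁻¹).card))) = (Z.card : ℝ) * (S.card : ℝ) ^ 2 / 2 := by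
        field_simp
      rw [heq] at hb
      linarith
    obtain ⟨s, hs, w, hww, hF⟩ := hex
    refine ⟨w * s, ?_⟩
    have hcard : ((Z.filter (fun z => (w * s) * z ∈ S)).card : ℝ)
        = ((S ∩ Z.image (fun z => (w * s) * z)).card : ℝ) := by
      congr 1
      refine Finset.card_bij (fun z _ => (w * s) * z) ?_ ?_ ?_
      · intro a ha
        rw [Finset.mem_filter] at ha
        exact Finset.mem_inter.2 ⟨ha.2, Finset.mem_image.2 ⟨a, ha.1, rfl⟩⟩
      · intro a _ b _ h; exact mul_left_cancel h
      · intro x hx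
        rw [Finset.mem_inter] at hx
        obtain ⟨z, hz, rfl⟩ := Finset.mem_image.1 hx.2
        exact ⟨z, Finset.mem_filter.2 ⟨hz, hx.1⟩, rfl⟩
    have hFval : (∑ z ∈ Z, (if w * (s * z) ∈ S then (1:ℝ) else 0))
        = ((S ∩ Z.image (fun z => (w * s) * z)).card : ℝ) := by
      have hassoc : (∑ z ∈ Z, (if w * (s * z) ∈ S then (1:ℝ) else 0))
          = ∑ z ∈ Z, (if (w * s) * z ∈ S then (1:ℝ) else 0) :=
        Finset.sum_congr rfl fun z _ => by rw [mul_assoc]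
      rw [hassoc, Finset.sum_boole, hcard]
    rw [hFval] at hF
    rw [div_le_div_iff₀ (by positivity) hzc]
    have := (div_le_iff₀ (by positivity : (0:ℝ) < 2 * (S * S⁻¹).card)).1 hF
    linarith
end

section
/- Let G be a finite group, W ⊆ G a symmetric neighbourhood of the identity, Y a symmetric neighbourhood with Y^{8r} ⊆ W⁴, and suppose |W¹²| ≤ D|W⁴|. Then there exists 0 ≤ i < r such that, setting Z⁻ := Y^{8i}W⁴Y^{8i}, Z := Y⁴Z⁻Y⁴, and Z⁺ := Y⁸Z⁻Y⁸, we have Z⁻Y⁴ ⊆ Z, Z(Y⁴)⁻¹ ⊆ Z⁺, and |Z⁺| ≤ D^{1/r}|Z⁻|; in particular if D^{1/r} ≤ 1+η then the pair (Z, Y⁴; Z⁺, Z⁻) is η-closed. -/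
open scoped BigOperators Pointwise

set_option maxHeartbeats 1000000 in
/-- Pigeonhole construction of an `η`-closed pair from nested product sets. -/
theorem exists_closed_pair_pigeonhole
    {G : Type*} [Group G] [Fintype G] [DecidableEq G]
    (W Y : Finset G) (r : ℕ) (hr : 1 ≤ r) (D η : ℝ)
    (hWone : (1 : G) ∈ W) (hWsymm : W⁻¹ = W)
    (hYone : (1 : G) ∈ Y) (hYsymm : Y⁻¹ = Y)
    (hYW : Y ^ (8 * r) ⊆ W ^ 4)
    (hD : ((W ^ 12).card : ℝ) ≤ D * (W ^ 4).card) :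
    ∃ i < r, ∀ Zm Z Zp : Finset G,
      Zm = Y ^ (8 * i) * W ^ 4 * Y ^ (8 * i) →
      Z = Y ^ 4 * Zm * Y ^ 4 →
      Zp = Y ^ 8 * Zm * Y ^ 8 →
      Zm * Y ^ 4 ⊆ Z ∧
      Z * (Y ^ 4)⁻¹ ⊆ Zp ∧
      ((Zp.card : ℝ) ≤ D ^ ((1 : ℝ) / r) * Zm.card) ∧
      (D ^ ((1 : ℝ) / r) ≤ 1 + η →
        (((Zp \ Zm).card : ℝ) ≤ η * Z.card)) := by
  classical
  have hstep : ∀ j : ℕ, Y ^ 8 * (Y ^ (8 * j) * W ^ 4 * Y ^ (8 * j)) * Y ^ 8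
      = Y ^ (8 * (j + 1)) * W ^ 4 * Y ^ (8 * (j + 1)) := by
    intro j
    calc Y ^ 8 * (Y ^ (8 * j) * W ^ 4 * Y ^ (8 * j)) * Y ^ 8
        = (Y ^ 8 * Y ^ (8 * j)) * W ^ 4 * (Y ^ (8 * j) * Y ^ 8) := by
          simp only [mul_assoc]
      _ = Y ^ (8 * (j + 1)) * W ^ 4 * Y ^ (8 * (j + 1)) := by
          rw [← pow_add, ← pow_add,
            show 8 + 8 * j = 8 * (j + 1) from by ring,
            show 8 * j + 8 = 8 * (j + 1) from by ring]
  set A : ℕ → Finset G := fun j => Y ^ (8 * j) * W ^ 4 * Y ^ (8 * j) with hA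
  set c : ℝ := D ^ ((1 : ℝ) / r) with hc
  have hA0 : A 0 = W ^ 4 := by simp [hA]
  have hAr : A r ⊆ W ^ 12 := by
    have h12 : W ^ 4 * W ^ 4 * W ^ 4 = W ^ 12 := by rw [← pow_add, ← pow_add]
    calc A r ⊆ W ^ 4 * W ^ 4 * W ^ 4 :=
          Finset.mul_subset_mul (Finset.mul_subset_mul hYW subset_rfl) hYW
      _ = W ^ 12 := h12
  have hApos : ∀ j, (0 : ℝ) < ((A j).card : ℝ) := by
    intro j
    have h1 : (1 : G) ∈ A j := by
      have := Finset.mul_mem_mul (Finset.mul_mem_mul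
        (Finset.one_mem_pow (n := 8 * j) hYone) (Finset.one_mem_pow (n := 4) hWone))
        (Finset.one_mem_pow (n := 8 * j) hYone)
      simpa using this
    have : 0 < (A j).card := Finset.card_pos.2 ⟨1, h1⟩
    exact_mod_cast this
  have hW4pos : (0 : ℝ) < (W ^ 4).card := by
    have := hApos 0; rwa [hA0] at this
  have hD1 : 1 ≤ D := by
    have hsub : W ^ 4 ⊆ W ^ 12 := Finset.pow_subset_pow_right hWone (by norm_num)
    have : ((W ^ 4).card : ℝ) ≤ ((W ^ 12).card : ℝ) :=
      Nat.cast_le.2 (Finset.card_le_card hsub)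
    nlinarith
  have hrR : (0 : ℝ) < (r : ℝ) := by exact_mod_cast hr
  have hc1 : 1 ≤ c := Real.one_le_rpow hD1 (by positivity)
  have hcpow : c ^ r = D := by
    rw [hc, ← Real.rpow_natCast (D ^ ((1 : ℝ) / r)) r,
      ← Real.rpow_mul (by linarith : (0 : ℝ) ≤ D), one_div,
      inv_mul_cancel₀ (ne_of_gt hrR), Real.rpow_one]
  -- pigeonhole
  have key : ∃ i < r, ((A (i + 1)).card : ℝ) ≤ c * ((A i).card : ℝ) := by
    by_contra hcon
    push_neg at hcon
    have hmono : ∀ n ≤ r, c ^ n * ((A 0).card : ℝ) ≤ ((A n).card : ℝ) := by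
      intro n hn
      induction n with
      | zero => simp
      | succ k ih =>
        have h1 := ih (by omega)
        have h2 := hcon k (by omega)
        have hck : (0 : ℝ) < c ^ k := pow_pos (by linarith) k
        calc c ^ (k + 1) * ((A 0).card : ℝ) = c * (c ^ k * ((A 0).card : ℝ)) := by ring
          _ ≤ c * ((A k).card : ℝ) := by nlinarith
          _ ≤ ((A (k + 1)).card : ℝ) := le_of_lt h2
    obtain ⟨k, rfl⟩ : ∃ k, r = k + 1 := ⟨r - 1, by omega⟩
    have h1 := hmono k (by omega)
    have h2 := hcon k (by omega)
    have hfr : ((A (k + 1)).card : ℝ) ≤ D * ((A 0).card : ℝ) := by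
      have h3 : ((A (k + 1)).card : ℝ) ≤ ((W ^ 12).card : ℝ) :=
        Nat.cast_le.2 (Finset.card_le_card hAr)
      rw [hA0]
      exact h3.trans hD
    have hck : (0 : ℝ) < c ^ k := pow_pos (by linarith) k
    have h4 : c ^ (k + 1) * ((A 0).card : ℝ) < ((A (k + 1)).card : ℝ) := by
      calc c ^ (k + 1) * ((A 0).card : ℝ) = c * (c ^ k * ((A 0).card : ℝ)) := by ring
        _ ≤ c * ((A k).card : ℝ) := by nlinarith
        _ < ((A (k + 1)).card : ℝ) := h2
    rw [hcpow] at h4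
    have := hApos 0
    linarith
  obtain ⟨i, hir, hkey⟩ := key
  refine ⟨i, hir, ?_⟩
  rintro Zm Z Zp rfl rfl rfl
  have hY41 : (1 : G) ∈ Y ^ 4 := Finset.one_mem_pow hYone
  have hY81 : (1 : G) ∈ Y ^ 8 := Finset.one_mem_pow hYone
  have hY48 : Y ^ 4 ⊆ Y ^ 8 := Finset.pow_subset_pow_right hYone (by norm_num)
  have hZpA : Y ^ 8 * (Y ^ (8 * i) * W ^ 4 * Y ^ (8 * i)) * Y ^ 8 = A (i + 1) := hstep i
  have hZmA : Y ^ (8 * i) * W ^ 4 * Y ^ (8 * i) = A i := rfl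
  refine ⟨?_, ?_, ?_, ?_⟩
  · -- Zm * Y^4 ⊆ Z
    simp only [mul_assoc]
    exact Finset.subset_mul_right _ hY41
  · -- Z * (Y^4)⁻¹ ⊆ Zp
    have hinv : (Y ^ 4)⁻¹ = Y ^ 4 := by rw [← inv_pow, hYsymm]
    have h44 : Y ^ 4 * Y ^ 4 = Y ^ 8 := by rw [← pow_add]
    simp only [hinv, mul_assoc, h44]
    exact Finset.mul_subset_mul_right hY48
  · -- cardinality bound
    rw [hZpA, hZmA]
    exact hkey
  · -- η-closure
    intro hη
    have hsub1 : (Y ^ (8 * i) * W ^ 4 * Y ^ (8 * i))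
        ⊆ Y ^ 8 * (Y ^ (8 * i) * W ^ 4 * Y ^ (8 * i)) * Y ^ 8 := fun x hx =>
      Finset.subset_mul_left _ hY81 (Finset.subset_mul_right _ hY81 hx)
    have hsub2 : (Y ^ (8 * i) * W ^ 4 * Y ^ (8 * i))
        ⊆ Y ^ 4 * (Y ^ (8 * i) * W ^ 4 * Y ^ (8 * i)) * Y ^ 4 := fun x hx =>
      Finset.subset_mul_left _ hY41 (Finset.subset_mul_right _ hY41 hx)
    have hcard : ((Y ^ 8 * (Y ^ (8 * i) * W ^ 4 * Y ^ (8 * i)) * Y ^ 8)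
        \ (Y ^ (8 * i) * W ^ 4 * Y ^ (8 * i))).card
        = (Y ^ 8 * (Y ^ (8 * i) * W ^ 4 * Y ^ (8 * i)) * Y ^ 8).card
          - (Y ^ (8 * i) * W ^ 4 * Y ^ (8 * i)).card :=
      Finset.card_sdiff_of_subset hsub1
    have hZmle : ((Y ^ (8 * i) * W ^ 4 * Y ^ (8 * i)).card : ℝ)
        ≤ ((Y ^ 4 * (Y ^ (8 * i) * W ^ 4 * Y ^ (8 * i)) * Y ^ 4).card : ℝ) :=
      Nat.cast_le.2 (Finset.card_le_card hsub2)
    have hZple : ((Y ^ 8 * (Y ^ (8 * i) * W ^ 4 * Y ^ (8 * i)) * Y ^ 8).card : ℝ)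
        ≤ c * ((Y ^ (8 * i) * W ^ 4 * Y ^ (8 * i)).card : ℝ) := by
      rw [hZpA, hZmA]; exact hkey
    have hZmpos : (0 : ℝ) < ((Y ^ (8 * i) * W ^ 4 * Y ^ (8 * i)).card : ℝ) := hApos i
    have hη0 : 0 ≤ η := by linarith
    have hle : (Y ^ (8 * i) * W ^ 4 * Y ^ (8 * i)).card
        ≤ (Y ^ 8 * (Y ^ (8 * i) * W ^ 4 * Y ^ (8 * i)) * Y ^ 8).card :=
      Finset.card_le_card hsub1
    rw [hcard]
    rw [Nat.cast_sub hle]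
    calc ((Y ^ 8 * (Y ^ (8 * i) * W ^ 4 * Y ^ (8 * i)) * Y ^ 8).card : ℝ)
        - ((Y ^ (8 * i) * W ^ 4 * Y ^ (8 * i)).card : ℝ)
        ≤ η * ((Y ^ (8 * i) * W ^ 4 * Y ^ (8 * i)).card : ℝ) := by nlinarith
      _ ≤ η * ((Y ^ 4 * (Y ^ (8 * i) * W ^ 4 * Y ^ (8 * i)) * Y ^ 4).card : ℝ) :=
          mul_le_mul_of_nonneg_left hZmle hη0
end

section
/- Let G be a finite group and f : G → ℝ be ε-almost integer-valued with ε ≤ 1/4 and ‖f‖_∞ ≤ M. Let H ≤ G and suppose (f ∗ m_H)_ℤ(x) ≠ 0 implies |f ∗ m_H(x)| ≥ 3/4 and f ∗ m_H is 1/4-almost integer-valued. Then |supp (f ∗ m_H)_ℤ| ≤ 2M |supp f_ℤ|. -/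
open scoped BigOperators Pointwise

/-- Convolution with the uniform probability measure on a subgroup `H`:
`f ∗ m_H (x) = (1/|H|) ∑_{h ∈ H} f(xh)`. -/
noncomputable def convMH {G : Type*} [Group G] [Fintype G] (f : G → ℝ)
    (H : Subgroup G) [Fintype H] : G → ℝ :=
  fun x => (∑ h : H, f (x * (h : G))) / (Fintype.card H : ℝ)

/-!
Averaging over cosets preserves total mass and is a positive affine operator. Let `χ` be the
indicator of `supp f_ℤ`. Pointwise `|f| ≤ M χ + 1/4`, so wherever `(f ∗ m_H)_ℤ ≠ 0` we get
`3/4 ≤ |f ∗ m_H| ≤ M (χ ∗ m_H) + 1/4`, i.e. `1 ≤ 2M (χ ∗ m_H)`. Summing over `supp (f ∗ m_H)_ℤ`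
gives `|supp (f ∗ m_H)_ℤ| ≤ 2M ∑ χ ∗ m_H = 2M ∑ χ = 2M |supp f_ℤ|`.
-/

namespace convMH

variable {G : Type*} [Group G] [Fintype G] (H : Subgroup G) [Fintype H]

theorem nonneg {g : G → ℝ} (hg : 0 ≤ g) (x : G) : 0 ≤ convMH g H x :=
  div_nonneg (Finset.sum_nonneg fun _ _ => hg _) (Nat.cast_nonneg _)

theorem abs_le_of_forall_abs_le {f g : G → ℝ} (hfg : ∀ y, |f y| ≤ g y) (x : G) :
    |convMH f H x| ≤ convMH g H x := by
  rw [convMH, abs_div, Nat.abs_cast]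
  exact div_le_div_of_nonneg_right
    ((Finset.abs_sum_le_sum_abs _ _).trans (Finset.sum_le_sum fun _ _ => hfg _))
    (Nat.cast_nonneg _)

theorem mul_add_const (g : G → ℝ) (a b : ℝ) (x : G) :
    convMH (fun y => a * g y + b) H x = a * convMH g H x + b := by
  have hH : (Fintype.card H : ℝ) ≠ 0 := Nat.cast_ne_zero.mpr Fintype.card_ne_zero
  simp only [convMH, Finset.sum_add_distrib, ← Finset.mul_sum, Finset.sum_const,
    Finset.card_univ, nsmul_eq_mul]
  field_simp

theorem sum_eq (f : G → ℝ) : ∑ x, convMH f H x = ∑ x, f x := by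
  have hH : (Fintype.card H : ℝ) ≠ 0 := Nat.cast_ne_zero.mpr Fintype.card_ne_zero
  have hshift : ∀ h : H, ∑ x, f (x * (h : G)) = ∑ x, f x := fun h =>
    Equiv.sum_comp (Equiv.mulRight (h : G)) f
  simp only [convMH, ← Finset.sum_div]
  rw [Finset.sum_comm, Finset.sum_congr rfl fun h _ => hshift h, Finset.sum_const,
    Finset.card_univ, nsmul_eq_mul]
  field_simp

end convMH

theorem abs_le_mul_indicator_add {α : Type*} {f : α → ℝ} {fZ : α → ℤ} {ε M : ℝ}
    (hf : ∀ x, |f x - fZ x| < ε) (hM : ∀ x, |f x| ≤ M) (y : α) :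
    |f y| ≤ M * (if fZ y ≠ 0 then 1 else 0) + ε := by
  by_cases hy : fZ y ≠ 0
  · have hε : 0 ≤ ε := (abs_nonneg _).trans (hf y).le
    simpa [hy] using le_add_of_le_of_nonneg (hM y) hε
  · simpa [not_not.mp hy] using (hf y).le

theorem supp_convMH_le_general {G : Type*} [Group G] [Fintype G]
    (f : G → ℝ) (fZ : G → ℤ) (ε M : ℝ) (hε : ε ≤ 1 / 4)
    (hf : ∀ x, |f x - fZ x| < ε) (hM : ∀ x, |f x| ≤ M)
    (H : Subgroup G) [Fintype H]
    (gZ : G → ℤ)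
    (hbig : ∀ x, gZ x ≠ 0 → 3 / 4 ≤ |convMH f H x|) :
    ((Finset.univ.filter fun x => gZ x ≠ 0).card : ℝ) ≤
      2 * M * ((Finset.univ.filter fun x => fZ x ≠ 0).card : ℝ) := by
  set χ : G → ℝ := fun y => if fZ y ≠ 0 then 1 else 0
  have hχ : 0 ≤ χ := fun y => by dsimp only [χ]; split_ifs <;> norm_num
  have hM0 : 0 ≤ M := (abs_nonneg _).trans (hM 1)
  have hmass : ∀ x, gZ x ≠ 0 → 1 ≤ 2 * M * convMH χ H x := fun x hx => by
    have := (hbig x hx).trans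
      (convMH.abs_le_of_forall_abs_le H (abs_le_mul_indicator_add hf hM) x)
    rw [convMH.mul_add_const] at this
    linarith
  calc ((Finset.univ.filter fun x => gZ x ≠ 0).card : ℝ)
      = ∑ x ∈ Finset.univ.filter fun x => gZ x ≠ 0, (1 : ℝ) := by simp
    _ ≤ ∑ x ∈ Finset.univ.filter fun x => gZ x ≠ 0, 2 * M * convMH χ H x :=
        Finset.sum_le_sum fun x hx => hmass x (Finset.mem_filter.mp hx).2
    _ ≤ ∑ x, 2 * M * convMH χ H x :=
        Finset.sum_le_sum_of_subset_of_nonneg (Finset.filter_subset _ _) fun x _ _ =>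
          mul_nonneg (by positivity) (convMH.nonneg H hχ x)
    _ = 2 * M * ((Finset.univ.filter fun x => fZ x ≠ 0).card : ℝ) := by
        rw [← Finset.mul_sum, convMH.sum_eq, Finset.sum_boole]

/-- Support-size bound: `|supp (f ∗ m_H)_ℤ| ≤ 2M |supp f_ℤ|`. -/
theorem supp_convMH_le {G : Type*} [Group G] [Fintype G] [DecidableEq G]
    (f : G → ℝ) (fZ : G → ℤ) (ε M : ℝ) (hε : ε ≤ 1 / 4)
    (hf : ∀ x, |f x - fZ x| < ε) (hM : ∀ x, |f x| ≤ M)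
    (H : Subgroup G) [Fintype H]
    (gZ : G → ℤ) (hgZ : ∀ x, |convMH f H x - gZ x| < 1 / 4)
    (hbig : ∀ x, gZ x ≠ 0 → 3 / 4 ≤ |convMH f H x|) :
    ((Finset.univ.filter fun x => gZ x ≠ 0).card : ℝ) ≤
      2 * M * ((Finset.univ.filter fun x => fZ x ≠ 0).card : ℝ) :=
  supp_convMH_le_general f fZ ε M hε hf hM H gZ hbig
end
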